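/- Let G = F₂ × ℤ = ⟨a, b⟩ × ⟨c⟩ and let φ be the automorphism fixing a and b and sending c to c⁻¹. Then Fix(φ) = ⟨a, b⟩ = F₂ × {1}, and Fix(φ) ∩ ⟨ca, b⟩ equals the normal closure of b in ⟨ca, b⟩ ≅ F₂, which is not finitely generated; hence Fix(φ) is not inert in G. -/
import Mathlib


/-- The fixed subgroup of an endomorphism of a group. -/
def fixedSubgroup {G : Type*} [Group G] (φ : G →* G) : Subgroup G where
  carrier := {g : G | φ g = g}
  one_mem' := map_one φ
  mul_mem' := by
    intro x y hx hy
    simp only [Set.mem_setOf_eq, map_mul] at *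
    rw [hx, hy]
  inv_mem' := by
    intro x hx
    simp only [Set.mem_setOf_eq, map_inv] at *
    rw [hx]

/-- A subgroup `H ≤ G` is inert in `G` if for every finitely generated subgroup
`K ≤ G`, the intersection `H ⊓ K` is finitely generated of rank at most `rank K`. -/
def Inert {G : Type*} [Group G] (H : Subgroup G) : Prop :=
  ∀ K : Subgroup G, ∀ hK : Group.FG K,
    ∃ h : Group.FG ↥(H ⊓ K), @Group.rank ↥(H ⊓ K) _ h ≤ @Group.rank ↥K _ hK

/-- The group `G = F₂ × ℤ`. -/
abbrev F2xZ : Type := FreeGroup (Fin 2) × Multiplicative ℤ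

/-- The generator `a` of the free factor. -/
def gena : F2xZ := (FreeGroup.of 0, 1)

/-- The generator `b` of the free factor. -/
def genb : F2xZ := (FreeGroup.of 1, 1)

/-- The generator `c` of the `ℤ` factor. -/
def genc : F2xZ := (1, Multiplicative.ofAdd 1)

/-- The automorphism of `G = F₂ × ℤ` fixing `a, b` and sending `c ↦ c⁻¹`. -/
def phi17 : F2xZ →* F2xZ :=
  (MonoidHom.id (FreeGroup (Fin 2))).prodMap invMonoidHom

/-- The subgroup `K = ⟨ca, b⟩`. -/
def K17 : Subgroup F2xZ := Subgroup.closure {genc * gena, genb}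

theorem genb_mem_K17 : genb ∈ K17 :=
  Subgroup.subset_closure (Set.mem_insert_iff.mpr (Or.inr rfl))

namespace Aux17

open FreeGroup SemidirectProduct Multiplicative

abbrev F2 := FreeGroup (Fin 2)

/-- exponent sum of the first generator -/
def g : F2 →* Multiplicative ℤ :=
  FreeGroup.lift (fun i => if i = 0 then ofAdd 1 else 1)

@[simp] lemma g_of0 : g (of 0) = ofAdd 1 := by simp [g]
@[simp] lemma g_of1 : g (of 1) = 1 := by simp [g]

abbrev X := Multiplicative (ℤ →₀ ℤ)

noncomputable def σW : MulAut X := AddEquiv.toMultiplicative (Finsupp.domCongr (Equiv.addRight 1))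

noncomputable def φW : Multiplicative ℤ →* MulAut X := zpowersHom _ σW

noncomputable def θ : F2 →* (X ⋊[φW] Multiplicative ℤ) :=
  FreeGroup.lift (fun i => if i = 0 then inr (ofAdd 1)
    else inl (ofAdd (Finsupp.single 0 1)))

@[simp] lemma θ_of0 : θ (of 0) = inr (ofAdd 1) := by simp [θ]
@[simp] lemma θ_of1 : θ (of 1) = inl (ofAdd (Finsupp.single 0 1)) := by simp [θ]

lemma right_θ (u : F2) : (θ u).right = g u := by
  have : (rightHom.comp θ : F2 →* Multiplicative ℤ) = g := by
    apply FreeGroup.ext_hom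
    intro a
    fin_cases a <;> simp
  calc (θ u).right = rightHom (θ u) := rfl
    _ = g u := DFunLike.congr_fun this u

lemma σW_single (k : ℤ) :
    σW (ofAdd (Finsupp.single k 1)) = ofAdd (Finsupp.single (k + 1) 1) := by
  have h : σW (ofAdd (Finsupp.single k 1)) =
      ofAdd (Finsupp.equivMapDomain (Equiv.addRight 1) (Finsupp.single k 1)) := rfl
  rw [h, Finsupp.equivMapDomain_single]
  rfl

lemma σW_pow_single (n : ℕ) :
    (σW ^ n) (ofAdd (Finsupp.single 0 1)) = ofAdd (Finsupp.single (n : ℤ) 1) := by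
  induction n with
  | zero => simp
  | succ n ih =>
    rw [pow_succ', MulAut.mul_apply, ih, σW_single]
    norm_cast

def wN (n : ℕ) : F2 := (of 0) ^ n * of 1 * ((of 0) ^ n)⁻¹

lemma g_wN (n : ℕ) : wN n ∈ g.ker := by
  simp [MonoidHom.mem_ker, wN]

lemma θ_wN (n : ℕ) : θ (wN n) = inl (ofAdd (Finsupp.single (n : ℤ) 1)) := by
  have h1 : θ ((of 0 : F2) ^ n) = inr (ofAdd 1 ^ n) := by
    rw [map_pow θ, θ_of0, ← map_pow]
  have h2 : θ (wN n) = inr (ofAdd 1 ^ n) * inl (ofAdd (Finsupp.single 0 1))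
      * inr ((ofAdd 1 ^ n)⁻¹) := by
    rw [wN, _root_.map_mul θ, _root_.map_mul θ, _root_.map_inv θ, h1, θ_of1,
      MonoidHom.map_inv inr]
  rw [h2, ← inl_aut]
  have h3 : φW (ofAdd 1 ^ n) = σW ^ n := by
    rw [map_pow]
    rfl
  rw [h3, σW_pow_single]

/-- elements of `ker g` whose "`y`-content" is supported in `I`. -/
def P (I : Finset ℤ) : Subgroup F2 where
  carrier := {u | (θ u).right = 1 ∧ (toAdd (θ u).left).support ⊆ I}
  one_mem' := by
    constructor <;> simp [_root_.map_one θ]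
  mul_mem' := by
    rintro x y ⟨hx1, hx2⟩ ⟨hy1, hy2⟩
    have hl : (θ (x * y)).left = (θ x).left * (θ y).left := by
      rw [_root_.map_mul θ, mul_left, hx1, _root_.map_one φW, MulAut.one_apply]
    have hr : (θ (x * y)).right = 1 := by
      rw [_root_.map_mul θ, mul_right, hx1, hy1, mul_one]
    refine ⟨hr, ?_⟩
    rw [hl]
    classical
    exact (Finsupp.support_add).trans (Finset.union_subset hx2 hy2)
  inv_mem' := by
    rintro x ⟨hx1, hx2⟩
    have hl : (θ x⁻¹).left = ((θ x).left)⁻¹ := by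
      rw [_root_.map_inv θ, inv_left, hx1, inv_one, _root_.map_one φW, MulAut.one_apply]
    have hr : (θ x⁻¹).right = 1 := by
      rw [_root_.map_inv θ, inv_right, hx1, inv_one]
    refine ⟨hr, ?_⟩
    rw [hl]
    have : toAdd ((θ x).left)⁻¹ = -(toAdd (θ x).left) := rfl
    rw [this, Finsupp.support_neg]
    exact hx2

theorem not_fg_ker_g : ¬ Group.FG ↥g.ker := by
  intro h
  rw [Group.fg_iff_subgroup_fg] at h
  obtain ⟨S, hS⟩ := h
  set I : Finset ℤ := S.sup (fun s => (toAdd (θ s).left).support) with hI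
  have hle : g.ker ≤ P I := by
    rw [← hS, Subgroup.closure_le]
    intro s hs
    have hker : s ∈ g.ker := by
      rw [← hS]
      exact Subgroup.subset_closure hs
    constructor
    · rw [right_θ]
      exact hker
    · have h2 := Finset.le_sup (f := fun s => (toAdd (θ s).left).support)
        (Finset.mem_coe.mp hs)
      simpa [hI] using h2
  set N : ℕ := (I.image Int.natAbs).sup id + 1 with hN
  have hNI : (N : ℤ) ∉ I := by
    intro hmem
    have h1 : Int.natAbs (N : ℤ) ≤ (I.image Int.natAbs).sup id :=
      Finset.le_sup (f := id) (Finset.mem_image_of_mem Int.natAbs hmem)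
    simp only [Int.natAbs_natCast] at h1
    omega
  have hw := (hle (g_wN N)).2
  rw [θ_wN, left_inl, toAdd_ofAdd, Finsupp.support_single_ne_zero _ one_ne_zero] at hw
  exact hNI (hw (Finset.mem_singleton_self _))


/-- The embedding of `F₂` into `F₂ × ℤ` sending `x ↦ ca`, `y ↦ b`. -/
noncomputable def ι : F2 →* F2xZ :=
  FreeGroup.lift (fun i => if i = 0 then genc * gena else genb)

@[simp] lemma ι_of0 : ι (of 0) = genc * gena := by simp [ι]
@[simp] lemma ι_of1 : ι (of 1) = genb := by simp [ι]

lemma fst_comp_ι : (MonoidHom.fst _ _).comp ι = MonoidHom.id F2 := by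
  apply FreeGroup.ext_hom
  intro a
  fin_cases a <;> simp [genc, gena, genb]

lemma ι_inj : Function.Injective ι := by
  intro u v h
  have h2 := DFunLike.congr_fun fst_comp_ι
  calc u = (MonoidHom.fst _ _).comp ι u := (h2 u).symm
    _ = (MonoidHom.fst _ _).comp ι v := by simp only [MonoidHom.comp_apply, h]
    _ = v := h2 v

lemma snd_comp_ι : (MonoidHom.snd (FreeGroup (Fin 2)) (Multiplicative ℤ)).comp ι = g := by
  apply FreeGroup.ext_hom
  intro a
  fin_cases a <;> simp [genc, gena, genb]

lemma closure_of01 : Subgroup.closure {FreeGroup.of 0, FreeGroup.of 1} = (⊤ : Subgroup F2) := by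
  rw [← FreeGroup.closure_range_of (Fin 2)]
  congr 1
  ext x
  simp [Fin.exists_fin_two, eq_comm]

lemma range_ι : ι.range = K17 := by
  rw [MonoidHom.range_eq_map, ← closure_of01, MonoidHom.map_closure]
  congr 1
  simp [Set.image_insert_eq]

lemma ι_mem_K17 (u : F2) : ι u ∈ K17 := by
  rw [← range_ι]
  exact ⟨u, rfl⟩

/-- `ι`, viewed as a (surjective) homomorphism onto `K17`. -/
noncomputable def ι' : F2 →* ↥K17 := ι.codRestrict K17 ι_mem_K17

lemma ι'_surj : Function.Surjective ι' := by
  rintro ⟨x, hx⟩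
  rw [← range_ι] at hx
  obtain ⟨u, hu⟩ := hx
  exact ⟨u, Subtype.ext hu⟩

lemma ker_g_eq : g.ker = Subgroup.normalClosure {FreeGroup.of 1} := by
  apply le_antisymm
  · intro u hu
    set Nc := Subgroup.normalClosure ({FreeGroup.of 1} : Set F2) with hNc
    set q := QuotientGroup.mk' Nc with hq
    set e : Multiplicative ℤ →* F2 ⧸ Nc := zpowersHom _ (q (of 0)) with he
    have hcomp : e.comp g = q := by
      apply FreeGroup.ext_hom
      intro a
      fin_cases a
      · simp [he]
      · have h1 : (FreeGroup.of 1 : F2) ∈ Nc :=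
          Subgroup.subset_normalClosure (Set.mem_singleton _)
        show e (g (FreeGroup.of 1)) = q (FreeGroup.of 1)
        simp only [g_of1, _root_.map_one]
        exact ((QuotientGroup.eq_one_iff _).mpr h1).symm
    have : q u = 1 := by
      rw [← hcomp]
      simp only [MonoidHom.comp_apply]
      rw [hu]
      exact _root_.map_one e
    exact (QuotientGroup.eq_one_iff u).mp this
  · apply Subgroup.normalClosure_le_normal
    intro x hx
    rw [Set.mem_singleton_iff] at hx
    subst hx
    exact g_of1

lemma mem_fix_iff (x : F2xZ) : x ∈ fixedSubgroup phi17 ↔ x.2 = 1 := by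
  obtain ⟨w, n⟩ := x
  constructor
  · intro h
    have h2 : (phi17 (w, n)).2 = n := congrArg Prod.snd h
    have h3 : n⁻¹ = n := h2
    have := congrArg toAdd h3
    rw [toAdd_inv] at this
    have : toAdd n = 0 := by omega
    exact toAdd_eq_zero.mp this
  · intro h
    have h' : n = 1 := h
    subst h'
    show phi17 (w, 1) = (w, 1)
    rfl

lemma inter_eq : fixedSubgroup phi17 ⊓ K17 = Subgroup.map ι g.ker := by
  ext x
  obtain ⟨w, n⟩ := x
  rw [Subgroup.mem_inf, mem_fix_iff, ← range_ι]
  constructor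
  · rintro ⟨h1, u, hu⟩
    refine ⟨u, ?_, hu⟩
    have : g u = ((w, n) : F2xZ).2 := by
      rw [← hu, ← snd_comp_ι]
      rfl
    show u ∈ g.ker
    rw [MonoidHom.mem_ker, this, h1]
  · rintro ⟨u, hk, hu⟩
    refine ⟨?_, u, hu⟩
    have : g u = ((w, n) : F2xZ).2 := by
      rw [← hu, ← snd_comp_ι]
      rfl
    have hk' : g u = 1 := hk
    rw [← this]
    exact hk'


lemma fix_eq_prod : fixedSubgroup phi17 =
    (⊤ : Subgroup (FreeGroup (Fin 2))).prod (⊥ : Subgroup (Multiplicative ℤ)) := by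
  ext x
  rw [mem_fix_iff, Subgroup.mem_prod]
  simp [Subgroup.mem_bot]

lemma closure_ab : Subgroup.closure {gena, genb} =
    (⊤ : Subgroup (FreeGroup (Fin 2))).prod (⊥ : Subgroup (Multiplicative ℤ)) := by
  have h1 : ({gena, genb} : Set F2xZ) =
      (MonoidHom.inl F2 (Multiplicative ℤ)) '' {FreeGroup.of 0, FreeGroup.of 1} := by
    rw [Set.image_insert_eq, Set.image_singleton]
    rfl
  rw [h1, ← MonoidHom.map_closure, closure_of01, ← MonoidHom.range_eq_map]
  ext x
  obtain ⟨w, n⟩ := x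
  rw [Subgroup.mem_prod]
  constructor
  · rintro ⟨u, hu⟩
    have h2 : n = 1 := (congrArg Prod.snd hu).symm
    exact ⟨trivial, h2 ▸ Subgroup.mem_bot.mpr rfl⟩
  · rintro ⟨-, hn⟩
    have h2 : n = 1 := Subgroup.mem_bot.mp hn
    exact ⟨w, by rw [h2]; rfl⟩

lemma part3 : fixedSubgroup phi17 ⊓ K17 =
    (Subgroup.normalClosure {(⟨genb, genb_mem_K17⟩ : ↥K17)}).map K17.subtype := by
  have h1 : Subgroup.normalClosure ({(⟨genb, genb_mem_K17⟩ : ↥K17)} : Set ↥K17)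
      = Subgroup.map ι' (Subgroup.normalClosure {FreeGroup.of 1}) := by
    rw [Subgroup.map_normalClosure _ _ ι'_surj, Set.image_singleton]
    have h2 : ι' (FreeGroup.of 1) = ⟨genb, genb_mem_K17⟩ := Subtype.ext (by simp [ι'])
    rw [h2]
  rw [inter_eq, ker_g_eq, h1, Subgroup.map_map]
  congr 1

lemma part5 : ¬ Group.FG ↥(fixedSubgroup phi17 ⊓ K17) := by
  rw [inter_eq]
  intro hfg
  apply not_fg_ker_g
  haveI := hfg
  have e := (Subgroup.equivMapOfInjective g.ker ι ι_inj).symm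
  exact Group.fg_of_surjective (f := e.toMonoidHom) e.surjective

lemma part6 : ¬ Inert (fixedSubgroup phi17) := by
  intro hIn
  have hKfg : Group.FG ↥K17 :=
    (Group.fg_iff_subgroup_fg K17).mpr
      ((Subgroup.fg_iff K17).mpr ⟨{genc * gena, genb}, rfl, Set.toFinite _⟩)
  obtain ⟨hfg, -⟩ := hIn K17 hKfg
  exact part5 hfg

end Aux17

open Aux17

/-- For `G = F₂ × ℤ` and `φ` fixing `a, b` and inverting `c`:
`Fix φ = ⟨a, b⟩ = F₂ × 1`; the intersection `Fix φ ⊓ ⟨ca, b⟩` is the normal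
closure of `b` in `⟨ca, b⟩`, which is not finitely generated; hence `Fix φ`
is not inert in `G`. -/
theorem fix_not_inert_F2xZ :
    fixedSubgroup phi17 = Subgroup.closure {gena, genb} ∧
    fixedSubgroup phi17 =
      (⊤ : Subgroup (FreeGroup (Fin 2))).prod (⊥ : Subgroup (Multiplicative ℤ)) ∧
    fixedSubgroup phi17 ⊓ K17 =
      (Subgroup.normalClosure {(⟨genb, genb_mem_K17⟩ : ↥K17)}).map K17.subtype ∧
    Nonempty (↥K17 ≃* FreeGroup (Fin 2)) ∧
    ¬ Group.FG ↥(fixedSubgroup phi17 ⊓ K17) ∧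
    ¬ Inert (fixedSubgroup phi17) := by
  refine ⟨fix_eq_prod.trans closure_ab.symm, fix_eq_prod, part3,
    ⟨(MulEquiv.subgroupCongr range_ι.symm).trans (MonoidHom.ofInjective ι_inj).symm⟩,
    part5, part6⟩
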